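/- arXiv:1305.1642 — 2 statements merged into one kernel-verified Lean document; each statement's English description precedes it below -/
import Mathlib

section
/- In ℚ[x₁,x₂,y₁,y₂], the ideal I generated by y₁+y₂−x₁−x₂ and y₁y₂−x₁x₂ is invariant under each derivation L_m = x₁^{m+1}∂/∂x₁ + x₂^{m+1}∂/∂x₂ + y₁^{m+1}∂/∂y₁ + y₂^{m+1}∂/∂y₂: L_m(I) ⊆ I for all m ≥ 0. -/
open MvPolynomial

/-- The standard Witt operator on `ℚ[x₁,x₂,y₁,y₂]`
(with `x₁ = X 0`, `x₂ = X 1`, `y₁ = X 2`, `y₂ = X 3`). -/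
noncomputable def wittL (m : ℕ) (p : MvPolynomial (Fin 4) ℚ) :
    MvPolynomial (Fin 4) ℚ :=
  ∑ i : Fin 4, X i ^ (m + 1) * pderiv i p

lemma wittL_add (m : ℕ) (a b : MvPolynomial (Fin 4) ℚ) :
    wittL m (a + b) = wittL m a + wittL m b := by
  simp [wittL, mul_add, Finset.sum_add_distrib]

lemma wittL_mul (m : ℕ) (a b : MvPolynomial (Fin 4) ℚ) :
    wittL m (a * b) = a * wittL m b + b * wittL m a := by
  simp only [wittL, Finset.mul_sum]
  rw [← Finset.sum_add_distrib]
  refine Finset.sum_congr rfl fun i _ => ?_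
  rw [pderiv_mul]
  ring

/-- Power sum differences `p_k(y) - p_k(x)` lie in the ideal. -/
lemma powsum_mem (k : ℕ) :
    (X 2 ^ k + X 3 ^ k - X 0 ^ k - X 1 ^ k : MvPolynomial (Fin 4) ℚ) ∈
      Ideal.span ({X 2 + X 3 - X 0 - X 1, X 2 * X 3 - X 0 * X 1} :
        Set (MvPolynomial (Fin 4) ℚ)) := by
  set I := Ideal.span ({X 2 + X 3 - X 0 - X 1, X 2 * X 3 - X 0 * X 1} :
      Set (MvPolynomial (Fin 4) ℚ))
  have hg1 : (X 2 + X 3 - X 0 - X 1 : MvPolynomial (Fin 4) ℚ) ∈ I :=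
    Ideal.subset_span (by simp)
  have hg2 : (X 2 * X 3 - X 0 * X 1 : MvPolynomial (Fin 4) ℚ) ∈ I :=
    Ideal.subset_span (by simp)
  induction k using Nat.strong_induction_on with
  | _ k ih =>
    match k with
    | 0 =>
      simp only [pow_zero]
      have h : (1 + 1 - 1 - 1 : MvPolynomial (Fin 4) ℚ) = 0 := by ring
      rw [h]; exact I.zero_mem
    | 1 => simpa using hg1
    | (k + 2) =>
      have h1 := ih (k + 1) (by omega)
      have h0 := ih k (by omega)
      have key : (X 2 ^ (k+2) + X 3 ^ (k+2) - X 0 ^ (k+2) - X 1 ^ (k+2) :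
          MvPolynomial (Fin 4) ℚ) =
          (X 2 + X 3) * (X 2 ^ (k+1) + X 3 ^ (k+1) - X 0 ^ (k+1) - X 1 ^ (k+1))
          + (X 0 ^ (k+1) + X 1 ^ (k+1)) * (X 2 + X 3 - X 0 - X 1)
          - (X 2 * X 3) * (X 2 ^ k + X 3 ^ k - X 0 ^ k - X 1 ^ k)
          - (X 0 ^ k + X 1 ^ k) * (X 2 * X 3 - X 0 * X 1) := by ring
      rw [key]
      exact I.sub_mem (I.sub_mem (I.add_mem (I.mul_mem_left _ h1)
        (I.mul_mem_left _ hg1)) (I.mul_mem_left _ h0)) (I.mul_mem_left _ hg2)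

/-- The ideal `(y₁+y₂−x₁−x₂, y₁y₂−x₁x₂)` is invariant under every `L_m`. -/
theorem soergel_ideal_invariant (m : ℕ) (f : MvPolynomial (Fin 4) ℚ)
    (hf : f ∈ Ideal.span ({X 2 + X 3 - X 0 - X 1, X 2 * X 3 - X 0 * X 1} :
      Set (MvPolynomial (Fin 4) ℚ))) :
    wittL m f ∈ Ideal.span ({X 2 + X 3 - X 0 - X 1, X 2 * X 3 - X 0 * X 1} :
      Set (MvPolynomial (Fin 4) ℚ)) := by
  set I := Ideal.span ({X 2 + X 3 - X 0 - X 1, X 2 * X 3 - X 0 * X 1} :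
      Set (MvPolynomial (Fin 4) ℚ)) with hI
  -- L_m of the generators
  have hg1 : wittL m (X 2 + X 3 - X 0 - X 1 : MvPolynomial (Fin 4) ℚ) ∈ I := by
    have : wittL m (X 2 + X 3 - X 0 - X 1 : MvPolynomial (Fin 4) ℚ) =
        X 2 ^ (m+1) + X 3 ^ (m+1) - X 0 ^ (m+1) - X 1 ^ (m+1) := by
      simp [wittL, Fin.sum_univ_four, pderiv_X]
      ring
    rw [this]; exact powsum_mem (m+1)
  have hg2 : wittL m (X 2 * X 3 - X 0 * X 1 : MvPolynomial (Fin 4) ℚ) ∈ I := by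
    have hpm := powsum_mem m
    have hg2' : (X 2 * X 3 - X 0 * X 1 : MvPolynomial (Fin 4) ℚ) ∈ I :=
      Ideal.subset_span (by simp)
    have : wittL m (X 2 * X 3 - X 0 * X 1 : MvPolynomial (Fin 4) ℚ) =
        (X 2 * X 3) * (X 2 ^ m + X 3 ^ m - X 0 ^ m - X 1 ^ m)
        + (X 0 ^ m + X 1 ^ m) * (X 2 * X 3 - X 0 * X 1) := by
      simp [wittL, Fin.sum_univ_four, pderiv_X]
      ring
    rw [this]
    exact I.add_mem (I.mul_mem_left _ hpm) (I.mul_mem_left _ hg2')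
  -- span induction
  refine Submodule.span_induction ?_ ?_ ?_ ?_ hf
  · rintro p (rfl | rfl)
    · exact hg1
    · exact hg2
  · simp [wittL]
  · intro a b _ _ ha hb
    rw [wittL_add]; exact I.add_mem ha hb
  · intro r p hp hLp
    rw [smul_eq_mul, wittL_mul]
    exact I.add_mem (I.mul_mem_left _ hLp) (Ideal.mul_mem_right _ _ hp)
end

section
/- Let I = (y₁+y₂−x₁−x₂, y₁y₂−x₁x₂) ⊆ ℚ[x₁,x₂,y₁,y₂] and let L_m be the standard derivation acting on all four variables. Then for every m ≥ 0: (1/2)(y₂−y₁+x₂−x₁)·π_m(x₁,x₂) ≡ (1/2)·L_m(y₂−y₁+x₂−x₁) (mod I), where π_m(u,v) = Σ_{i=0}^m u^i v^{m−i}. -/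
open MvPolynomial

/-- `π_m(u,v) = Σ_{i=0}^m u^i v^{m-i}`. -/
noncomputable def piPoly (u v : MvPolynomial (Fin 4) ℚ) (m : ℕ) :
    MvPolynomial (Fin 4) ℚ :=
  ∑ i ∈ Finset.range (m + 1), u ^ i * v ^ (m - i)

lemma piPoly_succ_left (u v : MvPolynomial (Fin 4) ℚ) (m : ℕ) :
    piPoly u v (m + 1) = u * piPoly u v m + v ^ (m + 1) := by
  unfold piPoly
  rw [Finset.sum_range_succ', Finset.mul_sum]
  simp only [Nat.succ_sub_succ, pow_zero, one_mul, Nat.sub_zero]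
  congr 1
  exact Finset.sum_congr rfl fun i _ => by ring

lemma piPoly_succ_right (u v : MvPolynomial (Fin 4) ℚ) (m : ℕ) :
    piPoly u v (m + 1) = v * piPoly u v m + u ^ (m + 1) := by
  unfold piPoly
  rw [Finset.sum_range_succ, Finset.mul_sum]
  simp only [Nat.sub_self, pow_zero, mul_one]
  congr 1
  refine Finset.sum_congr rfl fun i hi => ?_
  rw [Nat.succ_sub (Finset.mem_range_succ_iff.mp hi), pow_succ]
  ring

lemma piPoly_rec (u v : MvPolynomial (Fin 4) ℚ) (m : ℕ) :
    piPoly u v (m + 2) = (u + v) * piPoly u v (m + 1) - u * v * piPoly u v m := by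
  rw [show m + 2 = (m + 1) + 1 from rfl, piPoly_succ_left u v (m + 1),
    piPoly_succ_left u v m]
  ring

lemma piPoly_mul_sub (u v : MvPolynomial (Fin 4) ℚ) (m : ℕ) :
    piPoly u v m * (u - v) = u ^ (m + 1) - v ^ (m + 1) := by
  have := geom_sum₂_mul u v (m + 1)
  simpa [piPoly] using this

lemma piPoly_sub_mem (m : ℕ) :
    piPoly (X 0) (X 1) m - piPoly (X 2) (X 3) m ∈
      Ideal.span ({X 2 + X 3 - X 0 - X 1, X 2 * X 3 - X 0 * X 1} :
        Set (MvPolynomial (Fin 4) ℚ)) := by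
  set I := Ideal.span ({X 2 + X 3 - X 0 - X 1, X 2 * X 3 - X 0 * X 1} :
    Set (MvPolynomial (Fin 4) ℚ)) with hI
  have ha : (X 2 + X 3 - X 0 - X 1 : MvPolynomial (Fin 4) ℚ) ∈ I :=
    Ideal.subset_span (Set.mem_insert _ _)
  have hb : (X 2 * X 3 - X 0 * X 1 : MvPolynomial (Fin 4) ℚ) ∈ I :=
    Ideal.subset_span (Set.mem_insert_of_mem _ rfl)
  have key : ∀ n, (piPoly (X 0) (X 1) n - piPoly (X 2) (X 3) n ∈ I) ∧
      (piPoly (X 0) (X 1) (n + 1) - piPoly (X 2) (X 3) (n + 1) ∈ I) := by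
    intro n
    induction n with
    | zero =>
      constructor
      · simp [piPoly]
      · have h1 : piPoly (X 0) (X 1) 1 - piPoly (X 2) (X 3) 1
            = -(X 2 + X 3 - X 0 - X 1 : MvPolynomial (Fin 4) ℚ) := by
          simp [piPoly, Finset.sum_range_succ]
          ring
        rw [h1]
        exact I.neg_mem ha
    | succ k ih =>
      refine ⟨ih.2, ?_⟩
      have e : piPoly (X 0) (X 1) (k + 2) - piPoly (X 2) (X 3) (k + 2)
          = (X 0 + X 1) * (piPoly (X 0) (X 1) (k + 1) - piPoly (X 2) (X 3) (k + 1))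
            - (X 0 * X 1) * (piPoly (X 0) (X 1) k - piPoly (X 2) (X 3) k)
            - (X 2 + X 3 - X 0 - X 1) * piPoly (X 2) (X 3) (k + 1)
            + (X 2 * X 3 - X 0 * X 1) * piPoly (X 2) (X 3) k := by
        rw [piPoly_rec, piPoly_rec]
        ring
      rw [e]
      exact I.add_mem (I.sub_mem (I.sub_mem (I.mul_mem_left _ ih.2)
        (I.mul_mem_left _ ih.1)) (I.mul_mem_right _ ha)) (I.mul_mem_right _ hb)
  exact (key m).1

lemma wittL_eq (m : ℕ) :
    wittL m (X 3 - X 2 + X 1 - X 0) =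
      X 3 ^ (m + 1) - X 2 ^ (m + 1) + X 1 ^ (m + 1) - X 0 ^ (m + 1) := by
  simp [wittL, Fin.sum_univ_four, pderiv_X]
  ring

/-- `W⁺`-equivariance of `χ₊`: for `I = (y₁+y₂−x₁−x₂, y₁y₂−x₁x₂)`,
`(1/2)(y₂−y₁+x₂−x₁)·π_m(x₁,x₂) ≡ (1/2)·L_m(y₂−y₁+x₂−x₁)  (mod I)`. -/
theorem chi_plus_equivariant (m : ℕ) :
    (1/2 : ℚ) • ((X 3 - X 2 + X 1 - X 0) * piPoly (X 0) (X 1) m) -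
      (1/2 : ℚ) • wittL m (X 3 - X 2 + X 1 - X 0) ∈
      Ideal.span ({X 2 + X 3 - X 0 - X 1, X 2 * X 3 - X 0 * X 1} :
        Set (MvPolynomial (Fin 4) ℚ)) := by
  have h1 := piPoly_mul_sub (X 0 : MvPolynomial (Fin 4) ℚ) (X 1) m
  have h2 := piPoly_mul_sub (X 2 : MvPolynomial (Fin 4) ℚ) (X 3) m
  have key : (1/2 : ℚ) • ((X 3 - X 2 + X 1 - X 0) * piPoly (X 0) (X 1) m) -
      (1/2 : ℚ) • wittL m (X 3 - X 2 + X 1 - X 0)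
      = C (1/2 : ℚ) * ((X 3 - X 2) * (piPoly (X 0) (X 1) m - piPoly (X 2) (X 3) m)) := by
    rw [wittL_eq, smul_eq_C_mul, smul_eq_C_mul]
    linear_combination (-(C (1/2 : ℚ)) : MvPolynomial (Fin 4) ℚ) * h1 -
      (C (1/2 : ℚ) : MvPolynomial (Fin 4) ℚ) * h2
  rw [key]
  exact Ideal.mul_mem_left _ _ (Ideal.mul_mem_left _ _ (piPoly_sub_mem m))
end
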